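/- Let A be a real p × n matrix, B a real p × m matrix, b ∈ ℝ^p, c ∈ ℝ^n, and let u₁, …, u_K ∈ ℝ^m be finitely many points with K ≥ 1. Define φ(u) = inf { c ⬝ x : x ∈ ℝ^n, A x ≤ b + B u }. Suppose that for every u in the convex hull of {u₁, …, u_K} the feasible set { x : A x ≤ b + B u } is nonempty and { c ⬝ x : A x ≤ b + B u } is bounded below. Then sup { φ(u) : u ∈ convexHull {u₁, …, u_K} } = max_{1 ≤ k ≤ K} φ(u_k), and there exists an index k₀ such that φ(u_{k₀}) ≥ φ(u) for all u in the convex hull. -/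

import Mathlib

/-!
The value `φ(u)` of a linear program whose right-hand side depends affinely on `u` is convex in
`u`: a convex combination of feasible points for `u₁` and `u₂` is feasible for the same
combination of `u₁` and `u₂`, with the same combination of objective values. A convex function
on the convex hull of finitely many points attains its maximum at one of them.
-/

open Matrix Set
open scoped Pointwise

/-- `hsub` says that the graph `{(v, y) | y ∈ S v}` is convex. -/
theorem convexOn_sInf_of_smul_add_subset {E : Type*} [AddCommGroup E] [Module ℝ E]
    {s : Set E} {S : E → Set ℝ} (hs : Convex ℝ s)
    (hne : ∀ v ∈ s, (S v).Nonempty) (hbdd : ∀ v ∈ s, BddBelow (S v))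
    (hsub : ∀ v₁ v₂ : E, ∀ a₁ a₂ : ℝ, 0 ≤ a₁ → 0 ≤ a₂ → a₁ + a₂ = 1 →
      a₁ • S v₁ + a₂ • S v₂ ⊆ S (a₁ • v₁ + a₂ • v₂)) :
    ConvexOn ℝ s fun v => sInf (S v) := by
  refine ⟨hs, fun v₁ hv₁ v₂ hv₂ a₁ a₂ ha₁ ha₂ ha => ?_⟩
  have hne₁ := (hne v₁ hv₁).smul_set (a := a₁)
  have hne₂ := (hne v₂ hv₂).smul_set (a := a₂)
  calc sInf (S (a₁ • v₁ + a₂ • v₂)) ≤ sInf (a₁ • S v₁ + a₂ • S v₂) :=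
        csInf_le_csInf (hbdd _ (hs hv₁ hv₂ ha₁ ha₂ ha)) (hne₁.add hne₂)
          (hsub v₁ v₂ a₁ a₂ ha₁ ha₂ ha)
    _ = a₁ • sInf (S v₁) + a₂ • sInf (S v₂) := by
      rw [csInf_add hne₁ ((hbdd v₁ hv₁).smul_of_nonneg ha₁) hne₂
        ((hbdd v₂ hv₂).smul_of_nonneg ha₂), Real.sInf_smul_of_nonneg ha₁,
        Real.sInf_smul_of_nonneg ha₂]

theorem ConvexOn.isGreatest_image_convexHull_range {𝕜 ι E β : Type*} [Field 𝕜] [LinearOrder 𝕜]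
    [IsStrictOrderedRing 𝕜] [Fintype ι] [AddCommGroup E] [Module 𝕜 E] [AddCommGroup β]
    [LinearOrder β] [IsOrderedAddMonoid β] [Module 𝕜 β] [IsStrictOrderedModule 𝕜 β]
    {u : ι → E} {f : E → β} (hf : ConvexOn 𝕜 (convexHull 𝕜 (range u)) f)
    (hι : (Finset.univ : Finset ι).Nonempty) :
    IsGreatest (f '' convexHull 𝕜 (range u)) (Finset.univ.sup' hι (f ∘ u)) := by
  obtain ⟨k, -, hk⟩ := Finset.exists_mem_eq_sup' hι (f ∘ u)
  refine ⟨hk ▸ ⟨u k, subset_convexHull 𝕜 _ ⟨k, rfl⟩, rfl⟩, ?_⟩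
  rintro _ ⟨v, hv, rfl⟩
  obtain ⟨_, ⟨j, rfl⟩, hj⟩ := hf.exists_ge_of_mem_convexHull (subset_convexHull 𝕜 _) hv
  exact hj.trans (Finset.le_sup' (f ∘ u) (Finset.mem_univ j))

section ParametricLP

variable {ι σ τ : Type*} [Fintype σ] [Fintype τ]

def lpObjectiveValues (A : Matrix ι σ ℝ) (B : Matrix ι τ ℝ) (b : ι → ℝ) (c : σ → ℝ)
    (v : τ → ℝ) : Set ℝ :=
  {y | ∃ x, A *ᵥ x ≤ b + B *ᵥ v ∧ c ⬝ᵥ x = y}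

theorem mulVec_add_smul_le {A : Matrix ι σ ℝ} {B : Matrix ι τ ℝ} {b : ι → ℝ}
    {x₁ x₂ : σ → ℝ} {v₁ v₂ : τ → ℝ} {a₁ a₂ : ℝ} (ha₁ : 0 ≤ a₁) (ha₂ : 0 ≤ a₂)
    (ha : a₁ + a₂ = 1) (h₁ : A *ᵥ x₁ ≤ b + B *ᵥ v₁) (h₂ : A *ᵥ x₂ ≤ b + B *ᵥ v₂) :
    A *ᵥ (a₁ • x₁ + a₂ • x₂) ≤ b + B *ᵥ (a₁ • v₁ + a₂ • v₂) := by
  calc A *ᵥ (a₁ • x₁ + a₂ • x₂) = a₁ • A *ᵥ x₁ + a₂ • A *ᵥ x₂ := by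
        rw [mulVec_add, mulVec_smul, mulVec_smul]
    _ ≤ a₁ • (b + B *ᵥ v₁) + a₂ • (b + B *ᵥ v₂) :=
        add_le_add (smul_le_smul_of_nonneg_left h₁ ha₁) (smul_le_smul_of_nonneg_left h₂ ha₂)
    _ = (a₁ + a₂) • b + B *ᵥ (a₁ • v₁ + a₂ • v₂) := by
        rw [mulVec_add, mulVec_smul, mulVec_smul]
        module
    _ = b + B *ᵥ (a₁ • v₁ + a₂ • v₂) := by rw [ha, one_smul]

theorem smul_lpObjectiveValues_add_subset (A : Matrix ι σ ℝ) (B : Matrix ι τ ℝ) (b : ι → ℝ)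
    (c : σ → ℝ) {v₁ v₂ : τ → ℝ} {a₁ a₂ : ℝ} (ha₁ : 0 ≤ a₁) (ha₂ : 0 ≤ a₂) (ha : a₁ + a₂ = 1) :
    a₁ • lpObjectiveValues A B b c v₁ + a₂ • lpObjectiveValues A B b c v₂ ⊆
      lpObjectiveValues A B b c (a₁ • v₁ + a₂ • v₂) := by
  rintro _ ⟨_, ⟨_, ⟨x₁, hx₁, rfl⟩, rfl⟩, _, ⟨_, ⟨x₂, hx₂, rfl⟩, rfl⟩, rfl⟩
  refine ⟨a₁ • x₁ + a₂ • x₂, mulVec_add_smul_le ha₁ ha₂ ha hx₁ hx₂, ?_⟩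
  simp only [dotProduct_add, dotProduct_smul]

theorem convexOn_sInf_lpObjectiveValues (A : Matrix ι σ ℝ) (B : Matrix ι τ ℝ) (b : ι → ℝ)
    (c : σ → ℝ) {s : Set (τ → ℝ)} (hs : Convex ℝ s)
    (hne : ∀ v ∈ s, {x | A *ᵥ x ≤ b + B *ᵥ v}.Nonempty)
    (hbdd : ∀ v ∈ s, BddBelow (lpObjectiveValues A B b c v)) :
    ConvexOn ℝ s fun v => sInf (lpObjectiveValues A B b c v) :=
  convexOn_sInf_of_smul_add_subset hs
    (fun v hv => (hne v hv).elim fun x hx => ⟨c ⬝ᵥ x, x, hx, rfl⟩) hbdd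
    fun _ _ _ _ ha₁ ha₂ ha => smul_lpObjectiveValues_add_subset A B b c ha₁ ha₂ ha

end ParametricLP

/-- Correctness of the inspection-based oracle: the worst case over the convex
hull of finitely many scenarios of the LP value function `φ` equals the maximum
of `φ` over the scenarios, and is attained at one of them. -/
theorem inspection_oracle_correct
    {p n m K : ℕ} (hK : 1 ≤ K)
    (A : Matrix (Fin p) (Fin n) ℝ) (B : Matrix (Fin p) (Fin m) ℝ)
    (b : Fin p → ℝ) (c : Fin n → ℝ)
    (u : Fin K → (Fin m → ℝ))
    (φ : (Fin m → ℝ) → ℝ)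
    (hφ : ∀ v, φ v =
      sInf {y : ℝ | ∃ x : Fin n → ℝ, A.mulVec x ≤ b + B.mulVec v ∧ c ⬝ᵥ x = y})
    (hne : ∀ v ∈ convexHull ℝ (Set.range u),
      {x : Fin n → ℝ | A.mulVec x ≤ b + B.mulVec v}.Nonempty)
    (hbdd : ∀ v ∈ convexHull ℝ (Set.range u),
      BddBelow {y : ℝ | ∃ x : Fin n → ℝ, A.mulVec x ≤ b + B.mulVec v ∧ c ⬝ᵥ x = y}) :
    sSup (φ '' convexHull ℝ (Set.range u)) =
      Finset.univ.sup' ⟨⟨0, hK⟩, Finset.mem_univ _⟩ (fun k => φ (u k)) ∧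
    ∃ k₀ : Fin K, ∀ v ∈ convexHull ℝ (Set.range u), φ v ≤ φ (u k₀) := by
  obtain rfl : φ = fun v => sInf (lpObjectiveValues A B b c v) := funext hφ
  have hmax := (convexOn_sInf_lpObjectiveValues A B b c (convex_convexHull ℝ _) hne
    hbdd).isGreatest_image_convexHull_range ⟨⟨0, hK⟩, Finset.mem_univ _⟩
  obtain ⟨k₀, -, hk₀⟩ := Finset.exists_mem_eq_sup' ⟨⟨0, hK⟩, Finset.mem_univ _⟩
    (fun k => sInf (lpObjectiveValues A B b c (u k)))
  exact ⟨hmax.csSup_eq, k₀, fun v hv => (hmax.2 ⟨v, hv, rfl⟩).trans_eq hk₀⟩
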